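/- arXiv:math/0307367 — 9 statements merged into one kernel-verified Lean document; each statement's English description precedes it below -/
import Mathlib

section
/- Let a = (a_1,...,a_n) with all a_j > 0, D_n = diag(a_1,...,a_n), and let T(a) = {U ∈ O(E^n) : U^* D_n U = D_n}. If F and G are tight frames of k vectors on the ellipsoid E(a) (viewed as n×k matrices), then F and G lie in the same T(a)-orbit (i.e., G = UF for some U ∈ T(a)) if and only if F^* D_n F = G^* D_n G. -/
open Matrix

private lemma quad_zero {𝕜 : Type*} [RCLike 𝕜] {n : ℕ} (A : Matrix (Fin n) (Fin n) 𝕜)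
    (hherm : Aᴴ = A) (h : ∀ v : Fin n → 𝕜, star v ⬝ᵥ A.mulVec v = 0) : A = 0 := by
  have base : ∀ (p q : Fin n) (c d : 𝕜),
      star (Pi.single p c) ⬝ᵥ A.mulVec (Pi.single q d) = (starRingEnd 𝕜) c * (A p q * d) := by
    intro p q c d
    simp only [dotProduct, mulVec, Pi.star_apply, Pi.single_apply, apply_ite, star_zero,
      mul_ite, mul_zero, ite_mul, zero_mul, Finset.sum_ite_eq', Finset.mem_univ, if_true]
    rfl
  have key : ∀ (p q : Fin n) (c : 𝕜),
      A p p + (starRingEnd 𝕜) c * A q p + c * A p q + (starRingEnd 𝕜) c * c * A q q = 0 := by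
    intro p q c
    have h3 := h (Pi.single p 1 + Pi.single q c)
    simp only [star_add, add_dotProduct, mulVec_add, dotProduct_add, base, _root_.map_one] at h3
    linear_combination h3
  have hdiag : ∀ r, A r r = 0 := by
    intro r
    have := key r r 0
    simpa using this
  ext p q
  simp only [Matrix.zero_apply]
  have hqp : A q p = (starRingEnd 𝕜) (A p q) := by
    have := congrFun (congrFun hherm q) p
    simpa [Matrix.conjTranspose_apply] using this.symm
  have h1 := key p q 1
  simp only [_root_.map_one, one_mul, mul_one] at h1
  rw [hdiag p, hdiag q, hqp] at h1
  -- h1 : 0 + conj (A p q) + A p q + 0 = 0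
  have hc : (starRingEnd 𝕜) (A p q) = A p q := by
    rcases RCLike.I_mul_I_ax (K := 𝕜) with h0 | hI
    · rw [RCLike.conj_eq_iff_im]
      exact RCLike.im_eq_zero h0 _
    · have h2 := key p q RCLike.I
      rw [hdiag p, hdiag q, hqp, RCLike.conj_I] at h2
      have h2' : RCLike.I * (A p q - (starRingEnd 𝕜) (A p q)) = 0 := by linear_combination h2
      have h3 : RCLike.I * RCLike.I * (A p q - (starRingEnd 𝕜) (A p q)) = 0 := by
        rw [mul_assoc, h2', mul_zero]
      rw [hI] at h3
      linear_combination h3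
  linear_combination (h1 - hc) / 2

private lemma tight_gram {𝕜 : Type*} [RCLike 𝕜] {n k : ℕ} (F : Matrix (Fin n) (Fin k) 𝕜) (B : ℝ)
    (h : ∀ v : Fin n → 𝕜, ∑ j, ‖(∑ i, (starRingEnd 𝕜) (v i) * F i j)‖ ^ 2 = B * ∑ i, ‖v i‖ ^ 2) :
    F * Fᴴ = (B : 𝕜) • 1 := by
  have hquad : ∀ v : Fin n → 𝕜, star v ⬝ᵥ (F * Fᴴ).mulVec v = (B : 𝕜) * (star v ⬝ᵥ v) := by
    intro v
    have e1 : star v ⬝ᵥ (F * Fᴴ).mulVec v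
        = ((∑ j, ‖(∑ i, (starRingEnd 𝕜) (v i) * F i j)‖ ^ 2 : ℝ) : 𝕜) := by
      rw [← Matrix.mulVec_mulVec, Matrix.dotProduct_mulVec]
      push_cast
      simp only [dotProduct, vecMul, mulVec, Matrix.conjTranspose_apply, Pi.star_apply]
      apply Finset.sum_congr rfl
      intro j _
      have hs : (∑ i, star (F i j) * v i) = star (∑ i, star (v i) * F i j) := by
        rw [star_sum]
        exact Finset.sum_congr rfl fun i _ => by rw [star_mul', star_star, mul_comm]
      rw [hs]
      exact (RCLike.mul_conj _)
    have e2 : star v ⬝ᵥ v = ((∑ i, ‖v i‖ ^ 2 : ℝ) : 𝕜) := by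
      push_cast
      simp only [dotProduct, Pi.star_apply]
      exact Finset.sum_congr rfl fun i _ => RCLike.conj_mul _
    rw [e1, e2, h v]
    push_cast
    ring
  have hA : F * Fᴴ - (B : 𝕜) • 1 = 0 := by
    apply quad_zero
    · rw [Matrix.conjTranspose_sub, Matrix.conjTranspose_mul, Matrix.conjTranspose_conjTranspose,
        Matrix.conjTranspose_smul, Matrix.conjTranspose_one, RCLike.star_def, RCLike.conj_ofReal]
    · intro v
      rw [Matrix.sub_mulVec, dotProduct_sub, hquad, Matrix.smul_mulVec,
        Matrix.one_mulVec, dotProduct_smul, smul_eq_mul, sub_self]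
  rw [sub_eq_zero] at hA
  exact hA

private lemma gram_zero {𝕜 : Type*} [RCLike 𝕜] {n m : ℕ} (a : Fin n → ℝ) (ha : ∀ i, 0 < a i)
    (M : Matrix (Fin n) (Fin m) 𝕜)
    (h : Mᴴ * Matrix.diagonal (fun i => (a i : 𝕜)) * M = 0) : M = 0 := by
  ext i j
  simp only [Matrix.zero_apply]
  rw [Matrix.mul_assoc] at h
  have h' := congrFun (congrFun h j) j
  simp only [Matrix.mul_apply, Matrix.diagonal_mul, Matrix.conjTranspose_apply,
    Matrix.zero_apply, Matrix.diagonal_apply, ite_mul, zero_mul, Finset.sum_ite_eq,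
    Finset.mem_univ, if_true] at h'
  have hre : ∑ x, a x * ‖M x j‖ ^ 2 = 0 := by
    have hcast : ((∑ x, a x * ‖M x j‖ ^ 2 : ℝ) : 𝕜) = 0 := by
      rw [← h']
      push_cast
      apply Finset.sum_congr rfl
      intro x _
      rw [show star (M x j) * ((a x : 𝕜) * M x j)
          = (a x : 𝕜) * ((starRingEnd 𝕜) (M x j) * M x j) from by rw [RCLike.star_def]; ring,
        RCLike.conj_mul]
    exact_mod_cast hcast
  have hterm := (Finset.sum_eq_zero_iff_of_nonneg
    (fun x _ => mul_nonneg (ha x).le (sq_nonneg _))).mp hre i (Finset.mem_univ i)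
  have hnorm : ‖M i j‖ ^ 2 = 0 := by
    rcases mul_eq_zero.mp hterm with h0 | h0
    · exact absurd h0 (ha i).ne'
    · exact h0
  have := pow_eq_zero_iff (n := 2) (by norm_num) |>.mp hnorm
  exact norm_eq_zero.mp this

set_option maxHeartbeats 1000000 in
/-- Two ellipsoidal tight frames `F`, `G` of `k` vectors on the ellipsoid `E(a)`
(viewed as `n × k` matrices over `𝕜 = ℝ` or `ℂ`) lie in the same orbit of the group
`T(a) = {U ∈ O(𝕜ⁿ) : Uᴴ D U = D}` (with `D = diag a`) if and only if
`Fᴴ D F = Gᴴ D G`. -/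
theorem stmt3 {𝕜 : Type*} [RCLike 𝕜] {n k : ℕ}
    (a : Fin n → ℝ) (ha : ∀ i, 0 < a i)
    (F G : Matrix (Fin n) (Fin k) 𝕜)
    (hFtight : ∃ B > (0 : ℝ), ∀ v : Fin n → 𝕜,
      ∑ j, ‖(∑ i, (starRingEnd 𝕜) (v i) * F i j)‖ ^ 2 = B * ∑ i, ‖v i‖ ^ 2)
    (hGtight : ∃ B > (0 : ℝ), ∀ v : Fin n → 𝕜,
      ∑ j, ‖(∑ i, (starRingEnd 𝕜) (v i) * G i j)‖ ^ 2 = B * ∑ i, ‖v i‖ ^ 2)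
    (hFell : ∀ j, ∑ i, a i * ‖F i j‖ ^ 2 = 1)
    (hGell : ∀ j, ∑ i, a i * ‖G i j‖ ^ 2 = 1) :
    (∃ U ∈ Matrix.unitaryGroup (Fin n) 𝕜,
        Uᴴ * Matrix.diagonal (fun i => (a i : 𝕜)) * U = Matrix.diagonal (fun i => (a i : 𝕜)) ∧
        G = U * F) ↔
      Fᴴ * Matrix.diagonal (fun i => (a i : 𝕜)) * F =
        Gᴴ * Matrix.diagonal (fun i => (a i : 𝕜)) * G := by
  set D : Matrix (Fin n) (Fin n) 𝕜 := Matrix.diagonal (fun i => (a i : 𝕜)) with hD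
  constructor
  · rintro ⟨U, hU, hUDU, rfl⟩
    rw [Matrix.conjTranspose_mul]
    rw [show Fᴴ * Uᴴ * D * (U * F) = Fᴴ * (Uᴴ * D * U) * F by simp only [Matrix.mul_assoc], hUDU]
  · intro hFG
    rcases Nat.eq_zero_or_pos n with hn | hn
    · subst hn
      refine ⟨1, one_mem _, by simp, ?_⟩
      ext i j
      exact i.elim0
    obtain ⟨BF, hBF, hFt⟩ := hFtight
    obtain ⟨BG, hBG, hGt⟩ := hGtight
    have hFF : F * Fᴴ = (BF : 𝕜) • 1 := tight_gram F BF hFt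
    have hGG : G * Gᴴ = (BG : 𝕜) • 1 := tight_gram G BG hGt
    -- the two frame constants agree
    have trF : (Fᴴ * D * F).trace = (BF : 𝕜) * D.trace := by
      rw [Matrix.mul_assoc, Matrix.trace_mul_comm, Matrix.mul_assoc, hFF, Matrix.mul_smul,
        Matrix.mul_one, Matrix.trace_smul, smul_eq_mul]
    have trG : (Gᴴ * D * G).trace = (BG : 𝕜) * D.trace := by
      rw [Matrix.mul_assoc, Matrix.trace_mul_comm, Matrix.mul_assoc, hGG, Matrix.mul_smul,
        Matrix.mul_one, Matrix.trace_smul, smul_eq_mul]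
    have htrD : D.trace = ((∑ i, a i : ℝ) : 𝕜) := by
      rw [hD, Matrix.trace_diagonal]
      push_cast
      rfl
    have htrne : D.trace ≠ 0 := by
      rw [htrD]
      have : (0 : ℝ) < ∑ i, a i :=
        have : Nonempty (Fin n) := ⟨⟨0, hn⟩⟩
        Finset.sum_pos (fun i _ => ha i) Finset.univ_nonempty
      exact_mod_cast this.ne'
    have hBFG : BF = BG := by
      have : (BF : 𝕜) * D.trace = (BG : 𝕜) * D.trace := by rw [← trF, ← trG, hFG]
      have := mul_right_cancel₀ htrne this
      exact_mod_cast this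
    subst hBFG
    have hBF0 : (BF : 𝕜) ≠ 0 := by exact_mod_cast hBF.ne'
    set c : 𝕜 := ((BF⁻¹ : ℝ) : 𝕜) with hc
    have hcB : c * (BF : 𝕜) = 1 := by
      rw [hc, ← RCLike.ofReal_mul, inv_mul_cancel₀ hBF.ne', RCLike.ofReal_one]
    set U : Matrix (Fin n) (Fin n) 𝕜 := c • (G * Fᴴ) with hU
    have hUH : Uᴴ = c • (F * Gᴴ) := by
      rw [hU, Matrix.conjTranspose_smul, Matrix.conjTranspose_mul,
        Matrix.conjTranspose_conjTranspose, hc, RCLike.star_def, RCLike.conj_ofReal]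
    -- U * F = G
    have hN : F * ((BF : 𝕜) • (1 : Matrix (Fin k) (Fin k) 𝕜) - Fᴴ * F) = 0 := by
      rw [Matrix.mul_sub, Matrix.mul_smul, Matrix.mul_one, ← Matrix.mul_assoc, hFF,
        Matrix.smul_mul, Matrix.one_mul, sub_self]
    have hM : G * ((BF : 𝕜) • (1 : Matrix (Fin k) (Fin k) 𝕜) - Fᴴ * F) = 0 := by
      apply gram_zero a ha
      show (G * ((BF : 𝕜) • 1 - Fᴴ * F))ᴴ * D * (G * ((BF : 𝕜) • 1 - Fᴴ * F)) = 0
      calc (G * ((BF : 𝕜) • 1 - Fᴴ * F))ᴴ * D * (G * ((BF : 𝕜) • 1 - Fᴴ * F))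
          = ((BF : 𝕜) • 1 - Fᴴ * F)ᴴ * (Gᴴ * D * G) * ((BF : 𝕜) • 1 - Fᴴ * F) := by
            simp only [Matrix.conjTranspose_mul, Matrix.mul_assoc]
        _ = ((BF : 𝕜) • 1 - Fᴴ * F)ᴴ * (Fᴴ * D * F) * ((BF : 𝕜) • 1 - Fᴴ * F) := by rw [hFG]
        _ = (F * ((BF : 𝕜) • 1 - Fᴴ * F))ᴴ * D * (F * ((BF : 𝕜) • 1 - Fᴴ * F)) := by
            simp only [Matrix.conjTranspose_mul, Matrix.mul_assoc]
        _ = 0 := by rw [hN]; simp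
    have hGFF : G * (Fᴴ * F) = (BF : 𝕜) • G := by
      rw [Matrix.mul_sub, sub_eq_zero, Matrix.mul_smul, Matrix.mul_one] at hM
      exact hM.symm
    have hUF : U * F = G := by
      rw [hU, Matrix.smul_mul, Matrix.mul_assoc, hGFF, smul_smul, hcB, one_smul]
    -- U preserves D
    have hsq2 : (c * c) * ((BF : 𝕜) * (BF : 𝕜)) = 1 := by
      linear_combination (c * (BF : 𝕜) + 1) * hcB
    have keyF : F * (Fᴴ * D * F) * Fᴴ = ((BF : 𝕜) * (BF : 𝕜)) • D := by
      rw [show F * (Fᴴ * D * F) * Fᴴ = (F * Fᴴ) * D * (F * Fᴴ) by simp only [Matrix.mul_assoc],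
        hFF]
      rw [Matrix.smul_mul, Matrix.one_mul, Matrix.mul_smul, Matrix.mul_one, smul_smul]
    have keyG : G * (Gᴴ * D * G) * Gᴴ = ((BF : 𝕜) * (BF : 𝕜)) • D := by
      rw [show G * (Gᴴ * D * G) * Gᴴ = (G * Gᴴ) * D * (G * Gᴴ) by simp only [Matrix.mul_assoc],
        hGG]
      rw [Matrix.smul_mul, Matrix.one_mul, Matrix.mul_smul, Matrix.mul_one, smul_smul]
    have hUdU : Uᴴ * D * U = D := by
      rw [hUH, hU, Matrix.smul_mul, Matrix.mul_smul, Matrix.smul_mul, smul_smul]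
      rw [show F * Gᴴ * D * (G * Fᴴ) = F * (Gᴴ * D * G) * Fᴴ by simp only [Matrix.mul_assoc],
        ← hFG, keyF, smul_smul, hsq2, one_smul]
    have hUDU' : U * D * Uᴴ = D := by
      rw [hUH, hU, Matrix.smul_mul, Matrix.mul_smul, Matrix.smul_mul, smul_smul]
      rw [show G * Fᴴ * D * (F * Gᴴ) = G * (Fᴴ * D * F) * Gᴴ by simp only [Matrix.mul_assoc],
        hFG, keyG, smul_smul, hsq2, one_smul]
    -- U commutes with D
    have hsqD : U * (D * D) = D * D * U := by
      calc U * (D * D) = U * D * D := by rw [Matrix.mul_assoc]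
        _ = U * D * (Uᴴ * D * U) := by rw [hUdU]
        _ = (U * D * Uᴴ) * D * U := by simp only [Matrix.mul_assoc]
        _ = D * D * U := by rw [hUDU']
    have hcomm : U * D = D * U := by
      rw [hD, Matrix.diagonal_mul_diagonal] at hsqD
      ext i j
      rw [hD, Matrix.mul_diagonal, Matrix.diagonal_mul]
      have h5 := congrFun (congrFun hsqD i) j
      rw [Matrix.mul_diagonal, Matrix.diagonal_mul] at h5
      by_cases hU0 : U i j = 0
      · simp [hU0]
      · have haa : (a j : 𝕜) * (a j : 𝕜) = (a i : 𝕜) * (a i : 𝕜) :=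
          mul_left_cancel₀ hU0 (by linear_combination h5)
        have haa' : a j * a j = a i * a i := by exact_mod_cast haa
        have : a j = a i := by nlinarith [ha i, ha j]
        rw [this, mul_comm]
    have hUU : Uᴴ * U = 1 := by
      have h6 : Uᴴ * U * D = D := by
        calc Uᴴ * U * D = Uᴴ * (U * D) := by rw [Matrix.mul_assoc]
          _ = Uᴴ * (D * U) := by rw [hcomm]
          _ = Uᴴ * D * U := by rw [Matrix.mul_assoc]
          _ = D := hUdU
      have hDE : D * Matrix.diagonal (fun i => ((a i : 𝕜))⁻¹) = 1 := by
        rw [hD, Matrix.diagonal_mul_diagonal]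
        rw [show (fun i => (a i : 𝕜) * ((a i : 𝕜))⁻¹) = fun _ => (1 : 𝕜) from
          funext fun i => mul_inv_cancel₀ (by exact_mod_cast (ha i).ne')]
        exact Matrix.diagonal_one
      calc Uᴴ * U = Uᴴ * U * 1 := by rw [Matrix.mul_one]
        _ = Uᴴ * U * (D * Matrix.diagonal (fun i => ((a i : 𝕜))⁻¹)) := by rw [hDE]
        _ = (Uᴴ * U * D) * Matrix.diagonal (fun i => ((a i : 𝕜))⁻¹) := by
            rw [← Matrix.mul_assoc]
        _ = D * Matrix.diagonal (fun i => ((a i : 𝕜))⁻¹) := by rw [h6]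
        _ = 1 := hDE
    refine ⟨U, ?_, hUdU, hUF.symm⟩
    rw [Matrix.mem_unitaryGroup_iff']
    rw [Matrix.star_eq_conjTranspose]
    exact hUU
end

section
/- The set of rank-1 projections in M_{n+1}(R) all of whose diagonal entries equal 1/(n+1) has exactly 2^n elements. -/
/-!
Since its `2 × 2` minors vanish, a symmetric matrix `P` of rank one with `P₀₀ = c ≠ 0` equals
`c⁻¹ • r rᵀ` for its row `r = P 0`. A constant diagonal `c = 1/(n+1)` then forces `r k ^ 2 = c ^ 2`,
so `P = c • s sᵀ` for a sign vector `s = (1, ε₁, …, εₙ)`; conversely each such matrix is a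
rank-one projection because `s ⬝ᵥ s = n + 1`. Row `0` of `c • s sᵀ` is `c • s`, so distinct sign
vectors give distinct projections, and there are `2 ^ n` of them.
-/

open Matrix

namespace Matrix

section RankOne

variable {m n R : Type*} [Fintype n] [CommRing R] [IsDomain R]

theorem mul_mul_eq_mul_mul_of_rank_le_one {A : Matrix m n R} (hA : A.rank ≤ 1)
    (i k : m) (j l : n) : A i j * A k l = A i l * A k j := by
  by_contra h
  have hdet : (A.submatrix ![i, k] ![j, l]).det ≠ 0 := by
    rw [det_fin_two]
    simpa [sub_eq_zero] using h
  have := rank_submatrix_le A ![i, k] ![j, l]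
  rw [rank_of_det_ne_zero hdet, Fintype.card_fin] at this
  omega

theorem one_le_rank_of_apply_ne_zero {A : Matrix m n R} {i : m} {j : n} (h : A i j ≠ 0) :
    1 ≤ A.rank := by
  have hdet : (A.submatrix ![i] ![j]).det ≠ 0 := by rwa [det_fin_one]
  simpa only [rank_of_det_ne_zero hdet, Fintype.card_fin] using rank_submatrix_le A ![i] ![j]

end RankOne

section Symmetric

variable {ι K : Type*} [Fintype ι] [Field K]

theorem eq_inv_smul_vecMulVec_of_rank_le_one {P : Matrix ι ι K} (hsym : Pᵀ = P)
    (hP : P.rank ≤ 1) {i₀ : ι} (h₀ : P i₀ i₀ ≠ 0) :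
    P = (P i₀ i₀)⁻¹ • vecMulVec (P i₀) (P i₀) := by
  ext i j
  have hminor := mul_mul_eq_mul_mul_of_rank_le_one hP i₀ i i₀ j
  have hsymm : P i i₀ = P i₀ i := by rw [← hsym, transpose_apply, hsym]
  rw [hsymm] at hminor
  simp only [smul_apply, vecMulVec_apply, smul_eq_mul]
  field_simp
  linear_combination hminor

theorem inv_card_smul_vecMulVec_self_of_mul_self_eq_one [CharZero K] [Nonempty ι] {s : ι → K}
    (hs : ∀ i, s i * s i = 1) :
    let P := (Fintype.card ι : K)⁻¹ • vecMulVec s s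
    Pᵀ = P ∧ P * P = P ∧ P.rank = 1 ∧ ∀ i, P i i = (Fintype.card ι : K)⁻¹ := by
  intro P
  have hcard : (Fintype.card ι : K) ≠ 0 := by simp
  have hdot : s ⬝ᵥ s = Fintype.card ι := by simp [dotProduct, hs]
  refine ⟨by simp [P, transpose_vecMulVec], ?_, ?_, fun i => by simp [P, vecMulVec_apply, hs]⟩
  · simp only [P, smul_mul_smul_comm, vecMulVec_mul_vecMulVec, hdot, vecMulVec_smul, smul_smul]
    field_simp
  · obtain ⟨i⟩ := ‹Nonempty ι›
    have hii : P i i ≠ 0 := by simp [P, vecMulVec_apply, hs]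
    refine le_antisymm ?_ (one_le_rank_of_apply_ne_zero hii)
    rw [show P = vecMulVec ((Fintype.card ι : K)⁻¹ • s) s from (smul_vecMulVec _ _ _).symm]
    exact rank_vecMulVec_le _ _

end Symmetric

end Matrix

section SignVectors

variable {n : ℕ}

noncomputable def signVec (ε : Fin n → ℤˣ) : Fin (n + 1) → ℝ :=
  Fin.cons 1 fun i => ((ε i : ℤ) : ℝ)

@[simp]
theorem signVec_zero (ε : Fin n → ℤˣ) : signVec ε 0 = 1 := rfl

theorem signVec_injective : Function.Injective (signVec (n := n)) := by
  intro ε ε' h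
  funext i
  have := congrFun h i.succ
  simp only [signVec, Fin.cons_succ, Int.cast_inj] at this
  exact Units.ext this

theorem range_signVec :
    Set.range (signVec (n := n)) = {s | s 0 = 1 ∧ ∀ i, s i * s i = 1} := by
  ext s
  constructor
  · rintro ⟨ε, rfl⟩
    refine ⟨rfl, Fin.cases (by simp) fun i => ?_⟩
    rcases Int.units_eq_one_or (ε i) with h | h <;> simp [signVec, h]
  · rintro ⟨h0, hs⟩
    have hunit : ∀ i : Fin n, ∃ u : ℤˣ, ((u : ℤ) : ℝ) = s i.succ := fun i =>
      (mul_self_eq_one_iff.mp (hs i.succ)).elim (fun h => ⟨1, by simp [h]⟩)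
        fun h => ⟨-1, by simp [h]⟩
    choose ε hε using hunit
    refine ⟨ε, ?_⟩
    rw [← Fin.cons_self_tail s, h0]
    exact congrArg _ (funext hε)

noncomputable def signProjection (ε : Fin n → ℤˣ) : Matrix (Fin (n + 1)) (Fin (n + 1)) ℝ :=
  (1 / ((n : ℝ) + 1)) • vecMulVec (signVec ε) (signVec ε)

theorem signProjection_injective : Function.Injective (signProjection (n := n)) := by
  intro ε ε' h
  apply signVec_injective
  funext j
  have := congrFun (congrFun h 0) j
  simpa [signProjection, vecMulVec_apply, Nat.cast_add_one_ne_zero] using this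

theorem setOf_eq_range_signProjection :
    {P : Matrix (Fin (n + 1)) (Fin (n + 1)) ℝ |
      Pᵀ = P ∧ P * P = P ∧ P.rank = 1 ∧ ∀ i, P i i = 1 / ((n : ℝ) + 1)} =
      Set.range (signProjection (n := n)) := by
  ext P
  constructor
  · rintro ⟨hsym, -, hrank, hdiag⟩
    have hc : 1 / ((n : ℝ) + 1) ≠ 0 := by positivity
    generalize hc_def : 1 / ((n : ℝ) + 1) = c at hc hdiag
    have hP := eq_inv_smul_vecMulVec_of_rank_le_one hsym hrank.le (i₀ := 0) (hdiag 0 ▸ hc)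
    rw [hdiag] at hP
    obtain ⟨ε, hε⟩ : c⁻¹ • P 0 ∈ Set.range signVec := by
      rw [range_signVec]
      refine ⟨by simp [hdiag, hc], fun i => ?_⟩
      have hii := hdiag i
      rw [hP] at hii
      simp only [Matrix.smul_apply, vecMulVec_apply, smul_eq_mul, Pi.smul_apply] at hii ⊢
      field_simp at hii ⊢
      linear_combination hii
    have hrow : P 0 = c • signVec ε := by rw [hε, smul_smul, mul_inv_cancel₀ hc, one_smul]
    refine ⟨ε, ?_⟩
    rw [hP, hrow]
    ext i j
    simp only [signProjection, hc_def, Matrix.smul_apply, vecMulVec_apply, smul_eq_mul,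
      Pi.smul_apply]
    field_simp
  · rintro ⟨ε, rfl⟩
    have hs : ∀ i, signVec ε i * signVec ε i = 1 := (range_signVec.le (Set.mem_range_self ε)).2
    simpa [signProjection, one_div] using inv_card_smul_vecMulVec_self_of_mul_self_eq_one hs

end SignVectors

/-- The set of rank-1 projections in `M_{n+1}(ℝ)` with all diagonal entries equal to
`1/(n+1)` has exactly `2^n` elements. -/
theorem stmt8 (n : ℕ) :
    {P : Matrix (Fin (n + 1)) (Fin (n + 1)) ℝ |
      Pᵀ = P ∧ P * P = P ∧ P.rank = 1 ∧ ∀ i, P i i = 1 / ((n : ℝ) + 1)}.ncard = 2 ^ n := by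
  rw [setOf_eq_range_signProjection, Set.ncard_range_of_injective signProjection_injective]
  simp
end

section
/- Any two rank-1 projections P, Q in M_{n+1}(R) with all diagonal entries equal to 1/(n+1) are conjugate by a diagonal sign matrix: there exist ε_1,...,ε_{n+1} ∈ {±1} such that Q = D P D where D = diag(ε_1,...,ε_{n+1}). -/
/-!
The `2 × 2` minors of a rank-one matrix vanish; for a symmetric `P` this reads
`P i j * P k k = P i k * P j k`. If the diagonal is nowhere zero, then for a fixed index `k` the
column `P · k` determines `P`, and `(P i k)² = P i i * P k k`. Hence two such matrices with the
same diagonal have columns `Q · k` and `P · k` that differ entrywise by signs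
`ε i = Q i k / P i k`, and then `Q = D P D` with `D = diagonal ε`.
-/

open Matrix

namespace Matrix

variable {ι m n K : Type*} [Field K]

theorem exists_eq_vecMulVec_of_rank_le_one [Finite m] [Fintype n] {A : Matrix m n K}
    (h : A.rank ≤ 1) : ∃ c : m → K, ∃ v : n → K, A = vecMulVec c v := by
  rw [rank_eq_finrank_span_row, finrank_le_one_iff] at h
  obtain ⟨v, hv⟩ := h
  choose c hc using fun i => hv ⟨A i, Submodule.subset_span (Set.mem_range_self i)⟩
  refine ⟨c, v, ?_⟩
  ext i j
  simpa [vecMulVec_apply] using (congrFun (congrArg Subtype.val (hc i)) j).symm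

theorem apply_mul_apply_eq_of_rank_le_one [Finite m] [Fintype n] {A : Matrix m n K}
    (h : A.rank ≤ 1) (i k : m) (j l : n) : A i j * A k l = A i l * A k j := by
  obtain ⟨c, v, rfl⟩ := exists_eq_vecMulVec_of_rank_le_one h
  simp only [vecMulVec_apply]
  ring

theorem IsSymm.apply_mul_diag_eq_of_rank_le_one [Fintype ι] {A : Matrix ι ι K} (hA : A.IsSymm)
    (h : A.rank ≤ 1) (i j k : ι) : A i j * A k k = A i k * A j k := by
  rw [apply_mul_apply_eq_of_rank_le_one h i k j k, hA.apply k j]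

theorem IsSymm.exists_sign_conj_of_rank_le_one [Fintype ι] [DecidableEq ι] {P Q : Matrix ι ι K}
    (hP : P.IsSymm) (hQ : Q.IsSymm) (hPr : P.rank ≤ 1) (hQr : Q.rank ≤ 1)
    (hdiag : ∀ i, Q i i = P i i) (hne : ∀ i, P i i ≠ 0) :
    ∃ ε : ι → K, (∀ i, ε i = 1 ∨ ε i = -1) ∧ Q = diagonal ε * P * diagonal ε := by
  cases isEmpty_or_nonempty ι with
  | inl _ => exact ⟨0, isEmptyElim, Subsingleton.elim _ _⟩
  | inr hι =>
    obtain ⟨k⟩ := hι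
    have hPmin := hP.apply_mul_diag_eq_of_rank_le_one hPr
    have hQmin := hQ.apply_mul_diag_eq_of_rank_le_one hQr
    have hPk : ∀ i, P i k ≠ 0 := fun i hik => mul_ne_zero (hne i) (hne k) <| by
      simpa [hik] using hPmin i i k
    refine ⟨fun i => Q i k / P i k, fun i => mul_self_eq_one_iff.mp ?_, ?_⟩
    · have hPi := hPk i
      rw [div_mul_div_comm, div_eq_one_iff_eq (mul_ne_zero hPi hPi), ← hQmin, ← hPmin,
        hdiag, hdiag]
    · ext i j
      rw [mul_diagonal, diagonal_mul]
      have hPi := hPk i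
      have hPj := hPk j
      field_simp
      refine mul_right_cancel₀ (hne k) ?_
      linear_combination P i j * P k k * hQmin i j k - Q i j * P k k * hPmin i j k
        - Q i j * P i j * P k k * hdiag k

end Matrix

theorem stmt9_general (n : ℕ) (P Q : Matrix (Fin (n + 1)) (Fin (n + 1)) ℝ)
    (hPsym : Pᵀ = P) (hPrank : P.rank = 1)
    (hPdiag : ∀ i, P i i = 1 / ((n : ℝ) + 1))
    (hQsym : Qᵀ = Q) (hQrank : Q.rank = 1)
    (hQdiag : ∀ i, Q i i = 1 / ((n : ℝ) + 1)) :
    ∃ ε : Fin (n + 1) → ℝ, (∀ i, ε i = 1 ∨ ε i = -1) ∧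
      Q = Matrix.diagonal ε * P * Matrix.diagonal ε :=
  IsSymm.exists_sign_conj_of_rank_le_one hPsym hQsym hPrank.le hQrank.le
    (fun i => (hQdiag i).trans (hPdiag i).symm) (fun i => by rw [hPdiag]; positivity)

/-- Any two rank-1 projections in `M_{n+1}(ℝ)` with all diagonal entries `1/(n+1)` are
conjugate by a diagonal sign matrix. -/
theorem stmt9 (n : ℕ) (P Q : Matrix (Fin (n + 1)) (Fin (n + 1)) ℝ)
    (hPsym : Pᵀ = P) (hPidem : P * P = P) (hPrank : P.rank = 1)
    (hPdiag : ∀ i, P i i = 1 / ((n : ℝ) + 1))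
    (hQsym : Qᵀ = Q) (hQidem : Q * Q = Q) (hQrank : Q.rank = 1)
    (hQdiag : ∀ i, Q i i = 1 / ((n : ℝ) + 1)) :
    ∃ ε : Fin (n + 1) → ℝ, (∀ i, ε i = 1 ∨ ε i = -1) ∧
      Q = Matrix.diagonal ε * P * Matrix.diagonal ε :=
  stmt9_general n P Q hPsym hPrank hPdiag hQsym hQrank hQdiag
end

section
/- Up to the action of the orthogonal group O(n) on R^n and sign changes of individual vectors, there is exactly one spherical tight frame of n+1 vectors in R^n: if F, G are spherical tight frames of n+1 vectors in R^n, then there exist U ∈ O(n) and signs ε_1,...,ε_{n+1} ∈ {±1} with g_j = ε_j U f_j for all j. -/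
/-!
The Gram matrix `G` of a tight frame of unit vectors with constant `c = (n+1)/n` satisfies
`G * G = c • G`, so `P = 1 - c⁻¹ • G` is an orthogonal projection, of trace `(n+1) - (n+1)/c = 1`.
Since `n+1` vectors in `ℝⁿ` are dependent, some `w ≠ 0` has `∑ wᵢ fᵢ = 0`, so `P w = w` and
therefore `P = w wᵀ / ‖w‖²`. On the diagonal this says that all `wᵢ²` are equal; off the diagonal
it gives `⟪fᵢ, fⱼ⟫ = -εᵢ εⱼ / n` with `εᵢ` the sign of `wᵢ`. So after sign changes every such frame
has the Gram matrix of the regular simplex, and families with equal Gram matrices differ by a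
linear isometry.
-/

open Finset Matrix Module
open scoped RealInnerProductSpace

namespace Matrix

variable {ι : Type*} [Fintype ι]

theorem eq_zero_of_isHermitian_of_isIdempotentElem_of_trace_eq_zero {M : Matrix ι ι ℝ}
    (hM : M.IsHermitian) (hMM : IsIdempotentElem M) (htr : M.trace = 0) : M = 0 := by
  rw [← trace_conjTranspose_mul_self_eq_zero_iff, hM.eq, hMM.eq, htr]

theorem eq_smul_vecMulVec_of_isIdempotentElem_of_trace_eq_one {P : Matrix ι ι ℝ}
    (hP : P.IsHermitian) (hPP : IsIdempotentElem P) (htr : P.trace = 1) {w : ι → ℝ}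
    (hw : P *ᵥ w = w) (hw0 : w ≠ 0) : P = (w ⬝ᵥ w)⁻¹ • vecMulVec w w := by
  set Q := (w ⬝ᵥ w)⁻¹ • vecMulVec w w
  have hW : w ⬝ᵥ w ≠ 0 := mt dotProduct_self_eq_zero.mp hw0
  have hQ : Q.IsHermitian := by simp [Q, IsHermitian]
  have hQQ : IsIdempotentElem Q := by
    simp only [Q, IsIdempotentElem, smul_mul_smul, vecMulVec_mul_vecMulVec, vecMulVec_smul]
    rw [smul_smul, mul_assoc, inv_mul_cancel₀ hW, mul_one]
  have hPQ : P * Q = Q := by rw [Matrix.mul_smul, mul_vecMulVec, hw]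
  have hQP : Q * P = Q := by
    simpa only [conjTranspose_mul, hP.eq, hQ.eq] using congrArg conjTranspose hPQ
  have htrQ : Q.trace = 1 := by simp [Q, trace_smul, hW]
  refine sub_eq_zero.mp (eq_zero_of_isHermitian_of_isIdempotentElem_of_trace_eq_zero
    (hP.sub hQ) (hQQ.sub hPP hQP hPQ) ?_)
  rw [trace_sub, htr, htrQ, sub_self]

end Matrix

variable {ι E : Type*} [Fintype ι] [NormedAddCommGroup E] [InnerProductSpace ℝ E]

theorem inner_linearCombination_eq_of_gram_eq {f g : ι → E} (h : gram ℝ f = gram ℝ g)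
    (a b : ι → ℝ) :
    ⟪Fintype.linearCombination ℝ f a, Fintype.linearCombination ℝ f b⟫ =
      ⟪Fintype.linearCombination ℝ g a, Fintype.linearCombination ℝ g b⟫ := by
  simp only [Fintype.linearCombination_apply, ← star_dotProduct_gram_mulVec, h]

theorem exists_linearIsometryEquiv_of_gram_eq [FiniteDimensional ℝ E] {f g : ι → E}
    (h : gram ℝ f = gram ℝ g) : ∃ U : E ≃ₗᵢ[ℝ] E, ∀ i, U (f i) = g i := by
  classical
  set A := Fintype.linearCombination ℝ f
  set B := Fintype.linearCombination ℝ g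
  have hnorm (a : ι → ℝ) : ‖A a‖ = ‖B a‖ := by
    rw [norm_eq_sqrt_real_inner, norm_eq_sqrt_real_inner,
      inner_linearCombination_eq_of_gram_eq h]
  have hker : LinearMap.ker A ≤ LinearMap.ker B := fun a ha => by
    rwa [LinearMap.mem_ker, ← norm_eq_zero, ← hnorm, norm_eq_zero]
  -- Since `ker A ≤ ker B`, the map `∑ aᵢ fᵢ ↦ ∑ aᵢ gᵢ` is well defined on `span f`.
  let L : LinearMap.range A →ₗ[ℝ] E :=
    (LinearMap.ker A).liftQ B hker ∘ₗ A.quotKerEquivRange.symm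
  have hL (a : ι → ℝ) : L ⟨A a, LinearMap.mem_range_self A a⟩ = B a := by
    simp [L, LinearMap.quotKerEquivRange_symm_apply_image]
  let Li : LinearMap.range A →ₗᵢ[ℝ] E :=
    { toLinearMap := L
      norm_map' := by
        rintro ⟨_, a, rfl⟩
        rw [hL, ← hnorm]; rfl }
  refine ⟨Li.extend.toLinearIsometryEquiv rfl, fun i => ?_⟩
  have hfi : A (Pi.single i 1) = f i := by simp [A]
  simpa [← hfi, Li, hL, B] using Li.extend_apply ⟨A (Pi.single i 1), LinearMap.mem_range_self A _⟩

def IsTightFrame (c : ℝ) (f : ι → E) : Prop :=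
  ∀ v, ∑ i, ⟪v, f i⟫ ^ 2 = c * ‖v‖ ^ 2

theorem IsTightFrame.sum_inner_mul_inner {c : ℝ} {f : ι → E} (hf : IsTightFrame c f) (u v : E) :
    ∑ i, ⟪u, f i⟫ * ⟪v, f i⟫ = c * ⟪u, v⟫ := by
  have h : ∑ i, ⟪u + v, f i⟫ ^ 2 =
      ∑ i, ⟪u, f i⟫ ^ 2 + 2 * ∑ i, ⟪u, f i⟫ * ⟪v, f i⟫ + ∑ i, ⟪v, f i⟫ ^ 2 := by
    simp only [inner_add_left, add_sq, sum_add_distrib, mul_sum, mul_assoc]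
  rw [hf, hf, hf, norm_add_sq_real] at h
  linarith

theorem IsTightFrame.gram_mul_self {c : ℝ} {f : ι → E} (hf : IsTightFrame c f) :
    gram ℝ f * gram ℝ f = c • gram ℝ f := by
  ext i j
  simp only [mul_apply, gram_apply, Matrix.smul_apply, smul_eq_mul, real_inner_comm (f j),
    hf.sum_inner_mul_inner]

theorem trace_gram_of_forall_norm_eq_one {f : ι → E} (hf1 : ∀ i, ‖f i‖ = 1) :
    (gram ℝ f).trace = Fintype.card ι := by
  simp [trace, hf1]

theorem gram_mulVec_eq_zero_of_sum_smul_eq_zero {f : ι → E} {w : ι → ℝ}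
    (hw : ∑ i, w i • f i = 0) : gram ℝ f *ᵥ w = 0 := by
  ext i
  simp only [mulVec, dotProduct, gram_apply, mul_comm _ (w _), ← real_inner_smul_right,
    ← inner_sum, hw, inner_zero_right, Pi.zero_apply]

theorem IsTightFrame.exists_gram_eq_smul_one_sub [DecidableEq ι] [FiniteDimensional ℝ E] {n : ℕ}
    {f : ι → E} (hE : finrank ℝ E = n) (hι : Fintype.card ι = n + 1) (hf1 : ∀ i, ‖f i‖ = 1)
    (hf : IsTightFrame ((n + 1) / n) f) :
    ∃ w : ι → ℝ, w ≠ 0 ∧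
      gram ℝ f = ((n + 1) / n : ℝ) • (1 - (w ⬝ᵥ w)⁻¹ • vecMulVec w w) := by
  obtain ⟨i₀⟩ : Nonempty ι := Fintype.card_pos_iff.mp (by omega)
  have hn : (n : ℝ) ≠ 0 := by
    rintro hn
    rw [Nat.cast_eq_zero] at hn
    subst hn
    simpa [finrank_zero_iff_forall_zero.mp hE (f i₀)] using hf1 i₀
  have hdep : ¬LinearIndependent ℝ f := fun hli => by
    have := hli.fintype_card_le_finrank
    omega
  obtain ⟨w, hw, i₁, hi₁⟩ := Fintype.not_linearIndependent_iff.mp hdep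
  have hw0 : w ≠ 0 := fun h => hi₁ (by simp [h])
  set c : ℝ := (n + 1) / n
  have hc : c ≠ 0 := by positivity
  set P := 1 - c⁻¹ • gram ℝ f
  have hP : P.IsHermitian :=
    isHermitian_one.sub ((isHermitian_gram ℝ f).smul (IsSelfAdjoint.all _))
  have hPP : IsIdempotentElem P := by
    refine IsIdempotentElem.one_sub ?_
    rw [IsIdempotentElem, smul_mul_smul, hf.gram_mul_self, smul_smul, mul_assoc,
      inv_mul_cancel₀ hc, mul_one]
  have htr : P.trace = 1 := by
    rw [trace_sub, trace_one, trace_smul, trace_gram_of_forall_norm_eq_one hf1, hι]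
    have : (n : ℝ) + 1 ≠ 0 := by positivity
    simp only [c, inv_div, smul_eq_mul]
    push_cast
    field_simp
    ring
  have hPw : P *ᵥ w = w := by
    simp [P, sub_mulVec, smul_mulVec, gram_mulVec_eq_zero_of_sum_smul_eq_zero hw]
  refine ⟨w, hw0, ?_⟩
  rw [← eq_smul_vecMulVec_of_isIdempotentElem_of_trace_eq_one hP hPP htr hPw hw0]
  simp [P, smul_smul, hc]

theorem IsTightFrame.exists_signs_gram_eq [DecidableEq ι] [FiniteDimensional ℝ E] {n : ℕ}
    {f : ι → E} (hE : finrank ℝ E = n) (hι : Fintype.card ι = n + 1) (hf1 : ∀ i, ‖f i‖ = 1)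
    (hf : IsTightFrame ((n + 1) / n) f) :
    ∃ s : ι → ℝ, (∀ i, s i = 1 ∨ s i = -1) ∧
      gram ℝ (fun i => s i • f i) = of fun i j => if i = j then 1 else -(n : ℝ)⁻¹ := by
  obtain ⟨w, hw0, hG⟩ := hf.exists_gram_eq_smul_one_sub hE hι hf1
  obtain ⟨i₀, hi₀ : w i₀ ≠ 0⟩ := Function.ne_iff.mp hw0
  set W := w ⬝ᵥ w
  have hW : W ≠ 0 := mt dotProduct_self_eq_zero.mp hw0
  have hentry (i j : ι) : ⟪f i, f j⟫ =
      (n + 1) / n * ((if i = j then 1 else 0) - w i * w j / W) := by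
    simpa [W, one_apply, vecMulVec_apply, div_eq_inv_mul] using congrFun (congrFun hG i) j
  have hn : (n : ℝ) ≠ 0 := by
    rintro hn
    simpa [hn, real_inner_self_eq_norm_sq, hf1] using hentry i₀ i₀
  have hsq (i : ι) : w i ^ 2 = W / (n + 1) := by
    have h := hentry i i
    rw [real_inner_self_eq_norm_sq, hf1, if_pos rfl] at h
    field_simp at h ⊢
    linear_combination h
  refine ⟨fun i => w i / w i₀, fun i => ?_, ?_⟩
  · rw [← mul_self_eq_one_iff, div_mul_div_comm, ← sq, ← sq, hsq, hsq, div_self]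
    positivity
  · ext i j
    simp only [gram_apply, of_apply, real_inner_smul_left, real_inner_smul_right, hentry]
    split_ifs with hij
    · subst hij
      rw [← mul_assoc, div_mul_div_comm, ← sq, ← sq, hsq, hsq, div_self (by positivity), one_mul]
      field_simp
      ring
    · calc w j / w i₀ * (w i / w i₀ * ((n + 1) / n * (0 - w i * w j / W)))
          = -((n + 1) / n * (w i ^ 2 * w j ^ 2) / (w i₀ ^ 2 * W)) := by field_simp; ring
        _ = -(n : ℝ)⁻¹ := by rw [hsq, hsq, hsq]; field_simp


theorem stmt10_general (n : ℕ)
    (f g : Fin (n + 1) → EuclideanSpace ℝ (Fin n))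
    (hf1 : ∀ j, ‖f j‖ = 1) (hg1 : ∀ j, ‖g j‖ = 1)
    (hf : ∀ v : EuclideanSpace ℝ (Fin n),
      ∑ j, (inner ℝ v (f j) : ℝ) ^ 2 = (((n : ℝ) + 1) / n) * ‖v‖ ^ 2)
    (hg : ∀ v : EuclideanSpace ℝ (Fin n),
      ∑ j, (inner ℝ v (g j) : ℝ) ^ 2 = (((n : ℝ) + 1) / n) * ‖v‖ ^ 2) :
    ∃ (U : EuclideanSpace ℝ (Fin n) ≃ₗᵢ[ℝ] EuclideanSpace ℝ (Fin n))
      (ε : Fin (n + 1) → ℝ), (∀ j, ε j = 1 ∨ ε j = -1) ∧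
        ∀ j, g j = ε j • U (f j) := by
  have hE : finrank ℝ (EuclideanSpace ℝ (Fin n)) = n := finrank_euclideanSpace_fin
  obtain ⟨s, hs, hsG⟩ := IsTightFrame.exists_signs_gram_eq hE (Fintype.card_fin _) hf1 hf
  obtain ⟨t, ht, htG⟩ := IsTightFrame.exists_signs_gram_eq hE (Fintype.card_fin _) hg1 hg
  obtain ⟨U, hU⟩ := exists_linearIsometryEquiv_of_gram_eq (hsG.trans htG.symm)
  refine ⟨U, fun j => t j * s j, fun j => ?_, fun j => ?_⟩
  · rcases hs j with h | h <;> rcases ht j with h' | h' <;> simp [h, h']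
  · rw [mul_smul, ← map_smul, hU j, smul_smul, mul_self_eq_one_iff.mpr (ht j), one_smul]

/-- Up to orthogonal transformations of `ℝⁿ` and sign changes of individual vectors,
there is exactly one spherical tight frame of `n+1` vectors in `ℝⁿ`. -/
theorem stmt10 (n : ℕ) (hn : 1 ≤ n)
    (f g : Fin (n + 1) → EuclideanSpace ℝ (Fin n))
    (hf1 : ∀ j, ‖f j‖ = 1) (hg1 : ∀ j, ‖g j‖ = 1)
    (hf : ∀ v : EuclideanSpace ℝ (Fin n),
      ∑ j, (inner ℝ v (f j) : ℝ) ^ 2 = (((n : ℝ) + 1) / n) * ‖v‖ ^ 2)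
    (hg : ∀ v : EuclideanSpace ℝ (Fin n),
      ∑ j, (inner ℝ v (g j) : ℝ) ^ 2 = (((n : ℝ) + 1) / n) * ‖v‖ ^ 2) :
    ∃ (U : EuclideanSpace ℝ (Fin n) ≃ₗᵢ[ℝ] EuclideanSpace ℝ (Fin n))
      (ε : Fin (n + 1) → ℝ), (∀ j, ε j = 1 ∨ ε j = -1) ∧
        ∀ j, g j = ε j • U (f j) :=
  stmt10_general n f g hf1 hg1 hf hg
end

section
/- For n ≥ 1, define f_p ∈ R^n for 1 ≤ p ≤ n+1 by: f_p = √((n+1)/n) · (0,...,0, -(p-1)/√((p-1)p), 1/√(p(p+1)), ..., 1/√(n(n+1))) (with p-2 leading zeros, and where for p = 1 the entry -(p-1)/√((p-1)p) is absent so f_1 = √((n+1)/n)(1/√2, 1/√6, ..., 1/√(n(n+1)))). Then (f_1,...,f_{n+1}) is a spherical tight frame for R^n, and ⟨f_p, f_q⟩ = -1/n for all p ≠ q. -/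
/-!
Up to the factor `√((n+1)/n)`, the `f_p` are the rows of an `(n+1) × n` matrix `M` whose columns
are orthonormal and orthogonal to the all-ones vector; this is a short computation, column by
column. So `M` together with the column `1/√(n+1)` is an orthogonal matrix (the transposed
Helmert matrix), and orthonormality of its rows reads `M Mᵀ = I - J/(n+1)`, which gives the
inner products `⟨f_p, f_q⟩`. Tightness is `Mᵀ M = I`:
`∑_p ⟨v, f_p⟩² = ((n+1)/n) ‖M v‖² = ((n+1)/n) ‖v‖²`.
-/

open Finset Matrix

namespace Matrix

theorem mul_transpose_add_mul_transpose_eq_one {m k l R : Type*} [Fintype m] [Fintype k]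
    [Fintype l] [DecidableEq m] [DecidableEq k] [DecidableEq l] [CommRing R] (e : m ≃ k ⊕ l)
    {A : Matrix m k R} {B : Matrix m l R} (hA : Aᵀ * A = 1) (hAB : Aᵀ * B = 0)
    (hB : Bᵀ * B = 1) : A * Aᵀ + B * Bᵀ = 1 := by
  rw [← fromCols_mul_fromRows, fromCols_mul_fromRows_eq_one_comm e, fromRows_mul_fromCols,
    hA, hAB, hB, ← transpose_transpose A, ← transpose_mul, hAB, transpose_zero, fromBlocks_one]

theorem mulVec_dotProduct_mulVec_self {m k R : Type*} [Fintype m] [Fintype k] [DecidableEq k]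
    [CommRing R] {A : Matrix m k R} (hA : Aᵀ * A = 1) (v : k → R) :
    A *ᵥ v ⬝ᵥ A *ᵥ v = v ⬝ᵥ v := by
  rw [dotProduct_mulVec, ← vecMul_transpose, vecMul_vecMul, hA, vecMul_one]

end Matrix

noncomputable def helmertEntry (p i : ℕ) : ℝ :=
  if i + 1 < p then 0
  else if i + 1 = p then -(p : ℝ) / √((p : ℝ) * (p + 1))
  else 1 / √(((i : ℝ) + 1) * (i + 2))

lemma helmertEntry_of_le {p i : ℕ} (h : p ≤ i) :
    helmertEntry p i = 1 / √(((i : ℝ) + 1) * (i + 2)) := by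
  rw [helmertEntry, if_neg (by omega), if_neg (by omega)]

lemma helmertEntry_succ_self (i : ℕ) :
    helmertEntry (i + 1) i = -((i : ℝ) + 1) / √(((i : ℝ) + 1) * (i + 2)) := by
  simp only [helmertEntry, lt_self_iff_false, if_false, if_true, Nat.cast_succ]
  ring_nf

lemma helmertEntry_of_lt {p i : ℕ} (h : i + 1 < p) : helmertEntry p i = 0 := by
  rw [helmertEntry, if_pos h]

lemma sum_range_helmertEntry_mul {i m : ℕ} (hi : i + 1 < m) (g : ℕ → ℝ) :
    ∑ p ∈ range m, helmertEntry p i * g p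
      = (∑ p ∈ range (i + 1), g p - ((i : ℝ) + 1) * g (i + 1)) / √(((i : ℝ) + 1) * (i + 2)) := by
  obtain ⟨k, rfl⟩ : ∃ k, m = i + 2 + k := ⟨m - (i + 2), by omega⟩
  have htail : ∑ p ∈ range k, helmertEntry (i + 2 + p) i * g (i + 2 + p) = 0 :=
    sum_eq_zero fun p _ => by rw [helmertEntry_of_lt (by omega), zero_mul]
  have hhead : ∑ p ∈ range (i + 1), helmertEntry p i * g p
      = (∑ p ∈ range (i + 1), g p) / √(((i : ℝ) + 1) * (i + 2)) := by
    rw [sum_div]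
    refine sum_congr rfl fun p hp => ?_
    rw [helmertEntry_of_le (Nat.lt_succ_iff.mp (mem_range.mp hp)), one_div_mul_eq_div]
  rw [sum_range_add, htail, add_zero, sum_range_succ, hhead, helmertEntry_succ_self]
  ring

lemma sum_range_helmertEntry {i m : ℕ} (hi : i + 1 < m) : ∑ p ∈ range m, helmertEntry p i = 0 := by
  simpa using sum_range_helmertEntry_mul hi 1

lemma sum_range_helmertEntry_mul_helmertEntry {i j n : ℕ} (hi : i < n) (hj : j < n) :
    ∑ p ∈ range (n + 1), helmertEntry p i * helmertEntry p j = if i = j then 1 else 0 := by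
  wlog hij : i ≤ j generalizing i j
  · simp_rw [mul_comm (helmertEntry _ i), this hj hi (by omega), eq_comm]
  rw [sum_range_helmertEntry_mul (by omega)]
  obtain rfl | hlt := hij.eq_or_lt
  · have hs : √(((i : ℝ) + 1) * (i + 2)) ^ 2 = ((i : ℝ) + 1) * (i + 2) :=
      Real.sq_sqrt (by positivity)
    have hs0 : √(((i : ℝ) + 1) * (i + 2)) ≠ 0 := by positivity
    simp only [if_true, helmertEntry_succ_self]
    rw [sum_congr rfl fun p hp => helmertEntry_of_le (Nat.lt_succ_iff.mp (mem_range.mp hp))]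
    simp only [sum_const, card_range, nsmul_eq_mul]
    field_simp
    push_cast
    linear_combination -hs
  · rw [if_neg hlt.ne, sum_congr rfl fun p hp => helmertEntry_of_le (by simp at hp; omega),
      helmertEntry_of_le (by omega)]
    simp

/-- Row `p` is the paper's `f_{p+1}` divided by `√((n+1)/n)`. -/
noncomputable def simplexMatrix (n : ℕ) : Matrix (Fin (n + 1)) (Fin n) ℝ :=
  of fun p i => helmertEntry p i

lemma simplexMatrix_transpose_mul_self (n : ℕ) :
    (simplexMatrix n)ᵀ * simplexMatrix n = 1 := by
  ext i j
  have h := sum_range_helmertEntry_mul_helmertEntry i.isLt j.isLt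
  rw [← Fin.sum_univ_eq_sum_range (fun p => helmertEntry p i * helmertEntry p j)] at h
  simpa [simplexMatrix, mul_apply, one_apply, Fin.ext_iff] using h

lemma simplexMatrix_transpose_mul_const (n : ℕ) (c : ℝ) :
    (simplexMatrix n)ᵀ * of (fun (_ : Fin (n + 1)) (_ : Unit) => c) = 0 := by
  ext i
  simp only [mul_apply, transpose_apply, simplexMatrix, of_apply, ← sum_mul, Matrix.zero_apply]
  rw [Fin.sum_univ_eq_sum_range (fun p => helmertEntry p i), sum_range_helmertEntry (by omega),
    zero_mul]

lemma simplexMatrix_mul_transpose (n : ℕ) :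
    simplexMatrix n * (simplexMatrix n)ᵀ = 1 - of fun _ _ => ((n : ℝ) + 1)⁻¹ := by
  set B : Matrix (Fin (n + 1)) Unit ℝ := of fun _ _ => (√((n : ℝ) + 1))⁻¹
  have hsq : (√((n : ℝ) + 1))⁻¹ * (√((n : ℝ) + 1))⁻¹ = ((n : ℝ) + 1)⁻¹ := by
    rw [← mul_inv, Real.mul_self_sqrt (by positivity)]
  have hB : Bᵀ * B = 1 := by
    ext
    simp only [mul_apply, transpose_apply, of_apply, hsq, sum_const, card_univ, Fintype.card_fin,
      nsmul_eq_mul, Nat.cast_succ, one_apply_eq, B]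
    exact mul_inv_cancel₀ (by positivity)
  have hBB : B * Bᵀ = of fun _ _ => ((n : ℝ) + 1)⁻¹ := by
    ext
    simp [B, mul_apply, hsq]
  rw [← hBB, eq_sub_iff_add_eq]
  exact mul_transpose_add_mul_transpose_eq_one (Fintype.equivOfCardEq (by simp))
    (simplexMatrix_transpose_mul_self n) (simplexMatrix_transpose_mul_const n _) hB

section ScaledRows

variable {ι κ : Type*} [Fintype κ] {M : Matrix ι κ ℝ} {c : ℝ} {f : ι → EuclideanSpace ℝ κ}

lemma inner_eq_sq_mul_mul_transpose_apply (hf : ∀ p i, f p i = c * M p i) (p q : ι) :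
    inner ℝ (f p) (f q) = c ^ 2 * (M * Mᵀ) p q := by
  simp only [PiLp.inner_apply, RCLike.inner_apply, conj_trivial, hf, mul_apply, transpose_apply,
    mul_sum]
  exact sum_congr rfl fun i _ => by ring

lemma inner_eq_mul_mulVec_apply (hf : ∀ p i, f p i = c * M p i) (v : EuclideanSpace ℝ κ)
    (p : ι) : inner ℝ v (f p) = c * (M *ᵥ v.ofLp) p := by
  simp only [PiLp.inner_apply, RCLike.inner_apply, conj_trivial, hf, mulVec, dotProduct, mul_sum]
  exact sum_congr rfl fun i _ => by ring

lemma sum_inner_sq_eq_sq_mul_norm_sq [Fintype ι] [DecidableEq κ] (hM : Mᵀ * M = 1)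
    (hf : ∀ p i, f p i = c * M p i) (v : EuclideanSpace ℝ κ) :
    ∑ p, inner ℝ v (f p) ^ 2 = c ^ 2 * ‖v‖ ^ 2 := by
  calc ∑ p, inner ℝ v (f p) ^ 2 = c ^ 2 * (M *ᵥ v.ofLp ⬝ᵥ M *ᵥ v.ofLp) := by
        rw [dotProduct, mul_sum]
        exact sum_congr rfl fun p _ => by rw [inner_eq_mul_mulVec_apply hf]; ring
    _ = c ^ 2 * ‖v‖ ^ 2 := by
        rw [mulVec_dotProduct_mulVec_self hM, ← real_inner_self_eq_norm_sq,
          EuclideanSpace.inner_eq_star_dotProduct]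
        rfl

end ScaledRows

/-- The explicit vectors `f_p ∈ ℝⁿ` (`1 ≤ p ≤ n+1`), where the `i`-th coordinate
(1-indexed) of `f_p` is `√((n+1)/n)` times `0` if `i < p - 1`, `-(p-1)/√((p-1)p)` if
`i = p - 1`, and `1/√(i(i+1))` if `i ≥ p`, form a spherical tight frame for `ℝⁿ`, and
`⟨f_p, f_q⟩ = -1/n` for all `p ≠ q`. -/
theorem stmt11 (n : ℕ) (hn : 1 ≤ n)
    (f : Fin (n + 1) → EuclideanSpace ℝ (Fin n))
    (hf : ∀ (p : Fin (n + 1)) (i : Fin n),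
      f p i = Real.sqrt (((n : ℝ) + 1) / n) *
        (if (i : ℕ) + 1 < (p : ℕ) then 0
         else if (i : ℕ) + 1 = (p : ℕ) then
           -(p : ℝ) / Real.sqrt ((p : ℕ) * ((p : ℕ) + 1))
         else 1 / Real.sqrt (((i : ℕ) + 1) * ((i : ℕ) + 2)))) :
    (∀ p, ‖f p‖ = 1) ∧
    (∀ v : EuclideanSpace ℝ (Fin n),
      ∑ p, (inner ℝ v (f p) : ℝ) ^ 2 = (((n : ℝ) + 1) / n) * ‖v‖ ^ 2) ∧
    (∀ p q, p ≠ q → (inner ℝ (f p) (f q) : ℝ) = -1 / n) := by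
  set c := √(((n : ℝ) + 1) / n)
  have hc : c ^ 2 = ((n : ℝ) + 1) / n := Real.sq_sqrt (by positivity)
  have hfM : ∀ p i, f p i = c * simplexMatrix n p i := hf
  have hn0 : (n : ℝ) ≠ 0 := Nat.cast_ne_zero.mpr (by omega)
  have hgram (p q : Fin (n + 1)) : inner ℝ (f p) (f q)
      = ((n : ℝ) + 1) / n * ((if p = q then 1 else 0) - ((n : ℝ) + 1)⁻¹) := by
    rw [inner_eq_sq_mul_mul_transpose_apply hfM, hc, simplexMatrix_mul_transpose,
      Matrix.sub_apply, one_apply, of_apply]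
  refine ⟨fun p => ?_, fun v => ?_, fun p q hpq => ?_⟩
  · rw [norm_eq_sqrt_real_inner, hgram, if_pos rfl, Real.sqrt_eq_one]
    field_simp
    ring
  · rw [sum_inner_sq_eq_sq_mul_norm_sq (simplexMatrix_transpose_mul_self n) hfM, hc]
  · rw [hgram, if_neg hpq]
    field_simp
    ring
end

section
/- Every unital subalgebra of R^k (with coordinatewise multiplication) has the form span{E_A : A ∈ σ} for a unique partition σ of {1,...,k}, where E_A ∈ R^k is the indicator vector of A (i.e., (E_A)_i = 1 if i ∈ A, else 0). -/
open Set

namespace Stmt12Aux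

variable {k : ℕ}

/-- The class of `i`: all `j` where every element of `S` agrees with its value at `i`. -/
def cls (S : Subalgebra ℝ (Fin k → ℝ)) (i : Fin k) : Set (Fin k) :=
  {j | ∀ f ∈ S, f i = f j}

/-- The corresponding setoid. -/
def sd (S : Subalgebra ℝ (Fin k → ℝ)) : Setoid (Fin k) :=
  ⟨fun i j => ∀ f ∈ S, f i = f j,
   ⟨fun _ _ _ => rfl, fun h f hf => (h f hf).symm,
    fun h1 h2 f hf => (h1 f hf).trans (h2 f hf)⟩⟩

lemma mem_cls_self (S : Subalgebra ℝ (Fin k → ℝ)) (i : Fin k) : i ∈ cls S i :=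
  fun _ _ => rfl

lemma cls_eq_of_mem {S : Subalgebra ℝ (Fin k → ℝ)} {i j : Fin k} (h : j ∈ cls S i) :
    cls S j = cls S i := by
  ext x
  constructor
  · intro hx f hf; exact (h f hf).trans (hx f hf)
  · intro hx f hf; exact ((h f hf).symm).trans (hx f hf)

lemma cls_mem_classes (S : Subalgebra ℝ (Fin k → ℝ)) (i : Fin k) :
    cls S i ∈ (sd S).classes := by
  refine ⟨i, ?_⟩
  ext x
  exact ⟨fun h f hf => (h f hf).symm, fun h f hf => (h f hf).symm⟩

lemma classes_eq_cls {S : Subalgebra ℝ (Fin k → ℝ)} {C : Set (Fin k)}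
    (hC : C ∈ (sd S).classes) : ∃ i, C = cls S i := by
  obtain ⟨y, hy⟩ := hC
  refine ⟨y, ?_⟩
  rw [hy]
  ext x
  exact ⟨fun h f hf => (h f hf).symm, fun h f hf => (h f hf).symm⟩

/-- The indicator of a class lies in `S`. -/
lemma indicator_cls_mem (S : Subalgebra ℝ (Fin k → ℝ)) (i : Fin k) :
    (cls S i).indicator (fun _ => (1 : ℝ)) ∈ S := by
  classical
  have hg : ∀ j : Fin k, j ∉ cls S i → ∃ g, g ∈ S ∧ g i ≠ g j := by
    intro j hj
    simpa [cls, not_forall] using hj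
  choose g hgS hgne using hg
  set H : Fin k → (Fin k → ℝ) := fun j =>
    if hj : j ∉ cls S i then (g j hj i - g j hj j)⁻¹ • (g j hj - (g j hj j) • 1)
    else 1 with hH
  have hHS : ∀ j, H j ∈ S := by
    intro j
    simp only [hH]
    split
    · exact S.smul_mem (S.sub_mem (hgS _ _) (S.smul_mem S.one_mem _)) _
    · exact S.one_mem
  have hHi : ∀ j, H j i = 1 := by
    intro j
    simp only [hH]
    split
    · rename_i hj
      have hne : g j hj i - g j hj j ≠ 0 := sub_ne_zero.mpr (hgne j hj)
      simp only [Pi.smul_apply, Pi.sub_apply, Pi.one_apply, smul_eq_mul, mul_one]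
      field_simp
    · rfl
  have hHj : ∀ (j) (hj : j ∉ cls S i), H j j = 0 := by
    intro j hj
    simp only [hH, dif_pos hj]
    simp
  have key : (∏ j : Fin k, H j) = (cls S i).indicator (fun _ => (1 : ℝ)) := by
    funext x
    rw [Finset.prod_apply]
    by_cases hx : x ∈ cls S i
    · rw [Set.indicator_of_mem hx]
      have : ∀ j : Fin k, H j x = 1 := by
        intro j
        have := hx (H j) (hHS j)
        rw [← this, hHi j]
      simp [this]
    · rw [Set.indicator_of_notMem hx]
      exact Finset.prod_eq_zero (Finset.mem_univ x) (hHj x hx)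
  rw [← key]
  exact prod_mem fun j _ => hHS j

/-- Every `f ∈ S` lies in the span of indicators of classes. -/
lemma mem_span_of_mem (S : Subalgebra ℝ (Fin k → ℝ)) {f : Fin k → ℝ} (hf : f ∈ S) :
    f ∈ Submodule.span ℝ
      ((fun A : Set (Fin k) => A.indicator (fun _ => (1 : ℝ))) '' (sd S).classes) := by
  classical
  set n : Fin k → ℕ := fun j => (Finset.univ.filter (· ∈ cls S j)).card with hn
  have hnpos : ∀ j, 0 < n j := by
    intro j
    apply Finset.card_pos.mpr
    exact ⟨j, by simp [mem_cls_self S j]⟩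
  have hfeq : f = ∑ i : Fin k, (((n i : ℝ))⁻¹ * f i) •
      (cls S i).indicator (fun _ => (1 : ℝ)) := by
    funext x
    rw [Finset.sum_apply]
    have : ∀ i : Fin k,
        ((((n i : ℝ))⁻¹ * f i) • (cls S i).indicator (fun _ => (1 : ℝ))) x =
        if i ∈ cls S x then ((n x : ℝ))⁻¹ * f x else 0 := by
      intro i
      by_cases hi : i ∈ cls S x
      · have hcc : cls S i = cls S x := cls_eq_of_mem hi
        have hx : x ∈ cls S i := hcc ▸ mem_cls_self S x
        have hfval : f i = f x := (hi f hf).symm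
        have hnn : n i = n x := by rw [hn]; simp only; rw [hcc]
        rw [if_pos hi]
        simp [Set.indicator_of_mem hx, hfval, hnn]
      · have hx : x ∉ cls S i := by
          intro hx
          exact hi ((cls_eq_of_mem hx) ▸ mem_cls_self S i)
        rw [if_neg hi]
        simp [Set.indicator_of_notMem hx]
    rw [Finset.sum_congr rfl fun i _ => this i]
    rw [Finset.sum_ite, Finset.sum_const, Finset.sum_const_zero, add_zero]
    have : (Finset.univ.filter (· ∈ cls S x)).card = n x := rfl
    rw [this, nsmul_eq_mul]
    have hne : (n x : ℝ) ≠ 0 := Nat.cast_ne_zero.mpr (hnpos x).ne'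
    field_simp
  rw [hfeq]
  apply Submodule.sum_mem
  intro i _
  apply Submodule.smul_mem
  exact Submodule.subset_span ⟨cls S i, cls_mem_classes S i, rfl⟩

/-- Any partition whose indicator span equals `S` must be the set of classes. -/
lemma partition_unique (S : Subalgebra ℝ (Fin k → ℝ)) (τ : Set (Set (Fin k)))
    (hτ : Setoid.IsPartition τ)
    (hspan : Subalgebra.toSubmodule S =
      Submodule.span ℝ ((fun A : Set (Fin k) => A.indicator (fun _ => (1 : ℝ))) '' τ)) :
    τ = (sd S).classes := by
  have hmemS : ∀ f : Fin k → ℝ, f ∈ S ↔ f ∈ Submodule.span ℝ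
      ((fun A : Set (Fin k) => A.indicator (fun _ => (1 : ℝ))) '' τ) := by
    intro f
    rw [← hspan]
    rfl
  have hblock : ∀ A ∈ τ, ∀ i ∈ A, A = cls S i := by
    intro A hA i hiA
    apply Set.Subset.antisymm
    · intro j hjA f hf
      rw [hmemS] at hf
      induction hf using Submodule.span_induction with
      | mem g hg =>
        obtain ⟨B, hBτ, rfl⟩ := hg
        by_cases hiB : i ∈ B
        · have : B = A := by
            obtain ⟨b, ⟨hbτ, hib⟩, hbu⟩ := hτ.2 i
            rw [hbu B ⟨hBτ, hiB⟩, hbu A ⟨hA, hiA⟩]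
          have hjB : j ∈ B := this ▸ hjA
          show B.indicator (fun _ => (1 : ℝ)) i = B.indicator (fun _ => (1 : ℝ)) j
          rw [Set.indicator_of_mem hiB, Set.indicator_of_mem hjB]
        · have hjB : j ∉ B := by
            intro hjB
            apply hiB
            have : B = A := by
              obtain ⟨b, ⟨hbτ, hjb⟩, hbu⟩ := hτ.2 j
              rw [hbu B ⟨hBτ, hjB⟩, hbu A ⟨hA, hjA⟩]
            exact this ▸ hiA
          show B.indicator (fun _ => (1 : ℝ)) i = B.indicator (fun _ => (1 : ℝ)) j
          rw [Set.indicator_of_notMem hiB, Set.indicator_of_notMem hjB]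
      | zero => rfl
      | add g h _ _ ihg ihh => simp [ihg, ihh]
      | smul c g _ ihg => simp [ihg]
    · intro j hj
      have hIA : A.indicator (fun _ => (1 : ℝ)) ∈ S := by
        rw [hmemS]
        exact Submodule.subset_span ⟨A, hA, rfl⟩
      have := hj _ hIA
      rw [Set.indicator_of_mem hiA] at this
      by_contra hjA
      rw [Set.indicator_of_notMem hjA] at this
      exact one_ne_zero this
  ext C
  constructor
  · intro hC
    have hne : C ≠ ∅ := fun h => hτ.1 (h ▸ hC)
    obtain ⟨i, hi⟩ := Set.nonempty_iff_ne_empty.mpr hne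
    rw [hblock C hC i hi]
    exact cls_mem_classes S i
  · intro hC
    obtain ⟨y, rfl⟩ := classes_eq_cls hC
    obtain ⟨A, ⟨hAτ, hyA⟩, _⟩ := hτ.2 y
    rw [← hblock A hAτ y hyA]
    exact hAτ

end Stmt12Aux

/-- Every unital subalgebra of `ℝ^k` with coordinatewise multiplication is the span of
the indicator vectors of the blocks of a unique partition of `{1,…,k}`. -/
theorem stmt12 (k : ℕ) (S : Subalgebra ℝ (Fin k → ℝ)) :
    ∃! σ : Set (Set (Fin k)), Setoid.IsPartition σ ∧
      Subalgebra.toSubmodule S =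
        Submodule.span ℝ
          ((fun A : Set (Fin k) => A.indicator (fun _ => (1 : ℝ))) '' σ) := by
  refine ⟨(Stmt12Aux.sd S).classes, ⟨Setoid.isPartition_classes _, ?_⟩, ?_⟩
  · apply le_antisymm
    · intro f hf
      exact Stmt12Aux.mem_span_of_mem S hf
    · rw [Submodule.span_le]
      rintro _ ⟨C, hC, rfl⟩
      obtain ⟨i, rfl⟩ := Stmt12Aux.classes_eq_cls hC
      exact Stmt12Aux.indicator_cls_mem S i
  · rintro τ ⟨hτ, hspan⟩
    exact Stmt12Aux.partition_unique S τ hτ hspan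
end

section
/- Let P ∈ M_k(E) be a projection of rank n with all diagonal entries equal to n/k, 0 < n < k, and let d = gcd(n,k), k' = k/d. If A ⊆ {1,...,k} is a subset such that P commutes with the diagonal projection Q_A onto the coordinates in A, then |A| is a multiple of k'. -/
/-!
`P Q_A` is a product of commuting idempotents, hence idempotent, so its trace is its rank.
The trace is `∑_{i ∈ A} P i i = |A| n / k`, so `k ∣ |A| n`, and dividing out `gcd(n, k)`
leaves `k / gcd(n, k) ∣ |A|`.
-/

open Matrix

theorem Matrix.trace_eq_rank_of_isIdempotentElem {K ι : Type*} [Field K] [Fintype ι]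
    [DecidableEq ι] {M : Matrix ι ι K} (hM : IsIdempotentElem M) : M.trace = M.rank := by
  have hM' : IsIdempotentElem M.toLin' := hM.map Matrix.toLinAlgEquiv'
  rw [← Matrix.trace_toLin'_eq, (LinearMap.IsIdempotentElem.isProj_range _ hM').trace,
    Matrix.rank, Matrix.toLin'_apply']

theorem Matrix.isIdempotentElem_diagonal_indicator {R ι : Type*} [Semiring R] [Fintype ι]
    [DecidableEq ι] (A : Finset ι) :
    IsIdempotentElem (diagonal fun i => if i ∈ A then (1 : R) else 0) := by
  rw [IsIdempotentElem, diagonal_mul_diagonal]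
  congr 1; ext i; split_ifs <;> simp

theorem Matrix.trace_mul_diagonal_indicator {R ι : Type*} [Semiring R] [Fintype ι]
    [DecidableEq ι] (M : Matrix ι ι R) (A : Finset ι) :
    (M * diagonal fun i => if i ∈ A then (1 : R) else 0).trace = ∑ i ∈ A, M i i := by
  simp [Matrix.trace, Matrix.mul_diagonal, Finset.sum_ite_mem]

theorem Nat.div_gcd_dvd_of_dvd_mul {a n k : ℕ} (hk : 0 < k) (h : k ∣ a * n) :
    k / Nat.gcd n k ∣ a := by
  have hd := Nat.gcd_pos_of_pos_right n hk
  refine (Nat.coprime_div_gcd_div_gcd hd).symm.dvd_of_dvd_mul_right ?_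
  refine (Nat.mul_dvd_mul_iff_left hd).mp ?_
  rwa [Nat.mul_div_cancel' (Nat.gcd_dvd_right n k), mul_left_comm,
    Nat.mul_div_cancel' (Nat.gcd_dvd_left n k)]

theorem stmt14_general {𝕜 : Type*} [RCLike 𝕜] {n k : ℕ}
    (P : Matrix (Fin k) (Fin k) 𝕜)
    (hidem : P * P = P)
    (hdiag : ∀ i, P i i = (n : 𝕜) / k)
    (A : Finset (Fin k))
    (hcomm : P * Matrix.diagonal (fun i => if i ∈ A then (1 : 𝕜) else 0) =
      Matrix.diagonal (fun i => if i ∈ A then (1 : 𝕜) else 0) * P) :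
    (k / Nat.gcd n k) ∣ A.card := by
  obtain rfl | hk := Nat.eq_zero_or_pos k
  · simp [Finset.eq_empty_of_isEmpty A]
  set Q : Matrix (Fin k) (Fin k) 𝕜 := diagonal fun i => if i ∈ A then 1 else 0
  have hPQ : IsIdempotentElem (P * Q) :=
    IsIdempotentElem.mul_of_commute hcomm hidem (isIdempotentElem_diagonal_indicator A)
  have htrace : (A.card * n : 𝕜) = (P * Q).rank * k := by
    rw [← div_eq_iff (by exact_mod_cast hk.ne'), ← trace_eq_rank_of_isIdempotentElem hPQ,
      trace_mul_diagonal_indicator]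
    simp [hdiag, mul_div_assoc]
  exact Nat.div_gcd_dvd_of_dvd_mul hk ⟨_, by rw [mul_comm k]; exact_mod_cast htrace⟩

/-- If a rank-`n` projection `P ∈ M_k(𝕜)` with all diagonal entries `n/k` commutes with
the diagonal coordinate projection `Q_A`, then `|A|` is a multiple of `k' = k / gcd(n,k)`. -/
theorem stmt14 {𝕜 : Type*} [RCLike 𝕜] {n k : ℕ} (hn : 0 < n) (hnk : n < k)
    (P : Matrix (Fin k) (Fin k) 𝕜)
    (hsym : Pᴴ = P) (hidem : P * P = P) (hrank : P.rank = n)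
    (hdiag : ∀ i, P i i = (n : 𝕜) / k)
    (A : Finset (Fin k))
    (hcomm : P * Matrix.diagonal (fun i => if i ∈ A then (1 : 𝕜) else 0) =
      Matrix.diagonal (fun i => if i ∈ A then (1 : 𝕜) else 0) * P) :
    (k / Nat.gcd n k) ∣ A.card :=
  stmt14_general P hidem hdiag A hcomm
end

section
/- Let k ≥ 2 and let f_1,...,f_k ∈ R², identified with complex numbers z_1,...,z_k via (x,y) ↦ x + iy, with f_1 ≠ 0. Then (f_1,...,f_k) is a tight frame for R² if and only if Σ_{j=1}^k z_j² = 0. -/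
/-!
Writing `S = ∑ zⱼ²` and `T = ∑ |zⱼ|²`, the identity `(Re a)² = (|a|² + Re a²) / 2` applied to
`a = w̄ zⱼ` gives `∑ⱼ ⟨w, fⱼ⟩² = (T |w|² + Re (w̄² S)) / 2`. The frame is tight exactly when the
second term is a multiple of `|w|²`; comparing `w = 1, i, 1 + i` shows this forces `S = 0`, and
conversely `S = 0` gives the frame bound `T / 2`, which is positive because `z₁ ≠ 0`.
-/

open ComplexConjugate

namespace Complex

lemma re_sq_eq_half_norm_sq_add_re_sq (a : ℂ) : a.re ^ 2 = (‖a‖ ^ 2 + (a ^ 2).re) / 2 := by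
  rw [Complex.sq_norm, normSq_apply, pow_two a, mul_re]
  ring

lemma sum_re_conj_mul_sq {ι : Type*} (s : Finset ι) (z : ι → ℂ) (w : ℂ) :
    ∑ j ∈ s, (conj w * z j).re ^ 2 =
      (‖w‖ ^ 2 * ∑ j ∈ s, ‖z j‖ ^ 2 + (conj w ^ 2 * ∑ j ∈ s, z j ^ 2).re) / 2 := by
  simp only [re_sq_eq_half_norm_sq_add_re_sq, norm_mul, norm_conj, mul_pow, ← Finset.sum_div,
    Finset.sum_add_distrib, Finset.mul_sum, re_sum]

lemma eq_zero_of_re_conj_sq_mul_eq {S : ℂ} {c : ℝ}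
    (h : ∀ w : ℂ, (conj w ^ 2 * S).re = c * ‖w‖ ^ 2) :
    S = 0 := by
  have hnorm : ‖1 + I‖ ^ 2 = 2 := by
    rw [Complex.sq_norm, normSq_apply]
    norm_num
  have hconj : conj (1 + I) ^ 2 = -2 * I := by
    rw [map_add, map_one, conj_I]
    ring_nf
    rw [I_sq]
    ring
  have h₁ : S.re = c := by simpa using h 1
  have h_I : -S.re = c := by simpa using h I
  have h₁_I : 2 * S.im = c * 2 := by
    have := h (1 + I)
    rw [hconj, hnorm] at this
    simpa [mul_re] using this
  apply ext <;> simp only [zero_re, zero_im] <;> linarith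

end Complex

/-- Under the identification `ℝ² ≅ ℂ`, vectors `f₁,…,f_k` (with `f₁ ≠ 0`, `k ≥ 2`)
given by complex numbers `z₁,…,z_k` form a tight frame for `ℝ²` if and only if
`∑ⱼ zⱼ² = 0`. -/
theorem stmt17 (k : ℕ) (hk : 2 ≤ k) (z : Fin k → ℂ) (hz : z ⟨0, by omega⟩ ≠ 0) :
    (∃ B > (0 : ℝ), ∀ w : ℂ,
      ∑ j, (((starRingEnd ℂ) w * z j).re) ^ 2 = B * ‖w‖ ^ 2) ↔
    ∑ j, (z j) ^ 2 = 0 := by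
  simp only [Complex.sum_re_conj_mul_sq]
  set T := ∑ j, ‖z j‖ ^ 2
  constructor
  · rintro ⟨B, -, hB⟩
    refine Complex.eq_zero_of_re_conj_sq_mul_eq (c := 2 * B - T) fun w => ?_
    linarith [hB w]
  · intro hS
    have hT : 0 < T :=
      Finset.sum_pos' (fun j _ => by positivity) ⟨_, Finset.mem_univ _, pow_pos (norm_pos_iff.mpr hz) 2⟩
    exact ⟨T / 2, by positivity, fun w => by rw [hS]; simp only [mul_zero, Complex.zero_re]; ring⟩
end

section
/- Every spherical tight frame of four unit vectors in R² is a union of two orthonormal bases: if f_1, f_2, f_3, f_4 are unit vectors in R² with Σ_j ⟨v,f_j⟩² = 2‖v‖² for all v ∈ R², then there is a partition of {1,2,3,4} into two pairs {i,j}, {p,q} such that f_j = ±f_i^⊥ and f_q = ±f_p^⊥ (i.e., each pair is orthonormal up to sign, equivalently any four unimodular complex numbers whose squares sum to zero split into two pairs of negatives of each other). -/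
/-!
The squares `w j = z j ^ 2` are unimodular with `∑ w j = 0`; since `w⁻¹ = conj w` on the
unit circle, also `∑ (w j)⁻¹ = 0`. Thus the elementary symmetric functions `e₁` and
`e₃ = e₄ · ∑ (w j)⁻¹` of the `w j` vanish, and `(a + b) (a + c) (a + d) = a² e₁ + e₃ = 0`
forces one of the three pairings into negatives.
-/

theorem pairs_neg_of_sum_eq_zero_of_sum_inv_eq_zero {K : Type*} [Field K] {a b c d : K}
    (ha : a ≠ 0) (hb : b ≠ 0) (hc : c ≠ 0) (hd : d ≠ 0)
    (hsum : a + b + c + d = 0) (hsum_inv : a⁻¹ + b⁻¹ + c⁻¹ + d⁻¹ = 0) :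
    (a = -b ∧ c = -d) ∨ (a = -c ∧ b = -d) ∨ (a = -d ∧ b = -c) := by
  have he₃ : a * b * c + a * b * d + a * c * d + b * c * d = 0 := by
    field_simp at hsum_inv
    linear_combination hsum_inv
  have hprod : (a + b) * (a + c) * (a + d) = 0 := by
    linear_combination a ^ 2 * hsum + he₃
  rcases mul_eq_zero.mp hprod with hab_ac | had
  · rcases mul_eq_zero.mp hab_ac with hab | hac
    · exact .inl ⟨by linear_combination hab, by linear_combination hsum - hab⟩
    · exact .inr (.inl ⟨by linear_combination hac, by linear_combination hsum - hac⟩)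
  · exact .inr (.inr ⟨by linear_combination had, by linear_combination hsum - had⟩)

theorem Complex.pairs_neg_of_norm_eq_one_of_sum_eq_zero {a b c d : ℂ}
    (ha : ‖a‖ = 1) (hb : ‖b‖ = 1) (hc : ‖c‖ = 1) (hd : ‖d‖ = 1)
    (hsum : a + b + c + d = 0) :
    (a = -b ∧ c = -d) ∨ (a = -c ∧ b = -d) ∨ (a = -d ∧ b = -c) := by
  have ne_zero {w : ℂ} (hw : ‖w‖ = 1) : w ≠ 0 := norm_ne_zero_iff.mp (by simp [hw])
  refine pairs_neg_of_sum_eq_zero_of_sum_inv_eq_zero (ne_zero ha) (ne_zero hb) (ne_zero hc)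
    (ne_zero hd) hsum ?_
  rw [inv_eq_conj ha, inv_eq_conj hb, inv_eq_conj hc, inv_eq_conj hd, ← map_add, ← map_add,
    ← map_add, hsum, map_zero]

/-- Every spherical tight frame of four unit vectors in `ℝ² ≅ ℂ` (i.e. four unimodular
complex numbers whose squares sum to zero) is the union of two orthonormal bases: the
squares split into two pairs of negatives of each other. -/
theorem stmt18 (z : Fin 4 → ℂ) (hunit : ∀ j, ‖z j‖ = 1)
    (htight : ∑ j, (z j) ^ 2 = 0) :
    ∃ σ : Equiv.Perm (Fin 4),
      (z (σ 0)) ^ 2 = -(z (σ 1)) ^ 2 ∧ (z (σ 2)) ^ 2 = -(z (σ 3)) ^ 2 := by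
  have hsq_unit (j : Fin 4) : ‖z j ^ 2‖ = 1 := by rw [norm_pow, hunit j, one_pow]
  rw [Fin.sum_univ_four] at htight
  rcases Complex.pairs_neg_of_norm_eq_one_of_sum_eq_zero (hsq_unit 0) (hsq_unit 1) (hsq_unit 2)
    (hsq_unit 3) htight with h | h | h
  · exact ⟨Equiv.refl _, h⟩
  · exact ⟨Equiv.swap 1 2, by simpa [Equiv.swap_apply_of_ne_of_ne] using h⟩
  · exact ⟨Equiv.swap 1 3, by
      simpa [Equiv.swap_apply_of_ne_of_ne] using ⟨h.1, neg_eq_iff_eq_neg.mp h.2.symm⟩⟩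
end
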